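/- arXiv:1903.11890 — 2 statements merged into one kernel-verified Lean document; each statement's English description precedes it below -/
import Mathlib

section
/- If G is a connected graph with 𝒩_m(G) ≠ ∅ for some m and η(G) ≤ ⌊(diam(G) − 2)/4⌋, then Dim(G) = η(G). -/
/-- Set of vertices distinguishing `u` and `v`. -/
noncomputable def distinguishers {V : Type*} (G : SimpleGraph V) (u v : V) : Set V :=
  {w | G.dist u w ≠ G.dist v w}

/-- `Dim(G)`: the largest `k` such that every pair of distinct vertices is
distinguished by at least `k` vertices. -/
noncomputable def metricDim {V : Type*} (G : SimpleGraph V) : ℕ :=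
  sSup {k | ∀ u v : V, u ≠ v → k ≤ (distinguishers G u v).ncard}

/-- The boundary `∂N(v,m)`: vertices at distance `m` from `v` having a
neighbor outside `N(v,m)`. -/
def bdry {V : Type*} (G : SimpleGraph V) (v : V) (m : ℕ) : Set V :=
  {w | G.dist v w = m ∧ ∃ x, G.Adj w x ∧ m < G.dist v x}

/-- `v` and `v'` are distinct and have equal (nonempty) `m`-boundary. -/
def eqBdry {V : Type*} (G : SimpleGraph V) (v v' : V) (m : ℕ) : Prop :=
  v ≠ v' ∧ bdry G v m = bdry G v' m ∧ (bdry G v m).Nonempty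

noncomputable def etaM {V : Type*} (G : SimpleGraph V) (v v' : V) (m : ℕ) : ℕ :=
  {w | (G.dist v w ≤ m ∨ G.dist v' w ≤ m) ∧ G.dist v w ≠ G.dist v' w}.ncard

noncomputable def etaG {V : Type*} (G : SimpleGraph V) : ℕ :=
  sInf {n | ∃ (m : ℕ) (v v' : V), eqBdry G v v' m ∧ n = etaM G v v' m}

/-- the diameter of `G`. -/
noncomputable def gdiam {V : Type*} (G : SimpleGraph V) : ℕ :=
  sSup {n | ∃ u v : V, G.dist u v = n}

/-- Reachability in `G` avoiding the vertex set `S`. -/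
def ReachOff {V : Type*} (G : SimpleGraph V) (S : Set V) (a b : V) : Prop :=
  ∃ p : G.Walk a b, ∀ x ∈ p.support, x ∉ S

/-- `S` is a common separating subset of the `m`-spheres of `v` and `v'`. -/
def CommonSepSubset {V : Type*} (G : SimpleGraph V) (v v' : V) (m : ℕ) (S : Set V) : Prop :=
  S ⊆ {w | G.dist v w = m} ∩ {w | G.dist v' w = m} ∧
  (∃ a b : V, a ∉ S ∧ b ∉ S ∧ ¬ ReachOff G S a b) ∧
  (∃ w : V, w ∉ S ∧ ¬ ReachOff G S w v ∧ ¬ ReachOff G S w v')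

/-- `(v,v') ∈ 𝒫ₘ(G)`. -/
def memPm {V : Type*} (G : SimpleGraph V) (v v' : V) (m : ℕ) : Prop :=
  v ≠ v' ∧ ∃ S : Set V, CommonSepSubset G v v' m S

/-- `Sₘ(v,v')`: the union of all common separating subsets of the `m`-spheres. -/
def SmUnion {V : Type*} (G : SimpleGraph V) (v v' : V) (m : ℕ) : Set V :=
  {x | ∃ S : Set V, CommonSepSubset G v v' m S ∧ x ∈ S}

/-- The union of the components of `G \ Sₘ(v,v')` containing neither `v` nor `v'`. -/
def avoidComps {V : Type*} (G : SimpleGraph V) (v v' : V) (m : ℕ) : Set V :=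
  {w | w ∉ SmUnion G v v' m ∧ ¬ ReachOff G (SmUnion G v v' m) w v ∧
    ¬ ReachOff G (SmUnion G v v' m) w v'}

noncomputable def muM {V : Type*} (G : SimpleGraph V) (v v' : V) (m : ℕ) : ℕ :=
  {w | w ∉ avoidComps G v v' m ∧ G.dist v w ≠ G.dist v' w}.ncard

noncomputable def muG {V : Type*} (G : SimpleGraph V) : ℕ :=
  sInf {n | ∃ (m : ℕ) (v v' : V), memPm G v v' m ∧ n = muM G v v' m}

/-- degree as the cardinality of the neighbor set. -/
noncomputable def ndeg {V : Type*} (G : SimpleGraph V) (v : V) : ℕ := (G.neighborSet v).ncard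

def IsMajor {V : Type*} (G : SimpleGraph V) (v : V) : Prop := 3 ≤ ndeg G v

/-- `u` is a terminal vertex of the major vertex `w`. -/
def IsTerminalOf {V : Type*} (G : SimpleGraph V) (u w : V) : Prop :=
  ndeg G u = 1 ∧ IsMajor G w ∧
    ∀ w', IsMajor G w' → w' ≠ w → G.dist u w < G.dist u w'

/-- `G` is a V-graph. -/
def IsVGraph {V : Type*} (G : SimpleGraph V) : Prop :=
  ∃ w, IsMajor G w ∧ {u | IsTerminalOf G u w}.ncard = 2 ∧
    ∀ u, IsTerminalOf G u w → G.Adj u w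

/-- `G` is a block graph: connected and every biconnected (2-connected)
set of vertices induces a clique. -/
def IsBlockGraph {V : Type*} (G : SimpleGraph V) : Prop :=
  G.Connected ∧ ∀ B : Set V, 3 ≤ B.ncard → (G.induce B).Connected →
    (∀ x ∈ B, (G.induce (B \ {x})).Connected) → G.IsClique B

/-- `G` is tagged. -/
def Tagged {V : Type*} (G : SimpleGraph V) : Prop :=
  ∃ K : Set V, G.IsClique K ∧ (∀ K' : Set V, K ⊆ K' → G.IsClique K' → K' = K) ∧
    3 ≤ K.ncard ∧ ∃ u ∈ K, ∃ v ∈ K, u ≠ v ∧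
      ndeg G u = K.ncard - 1 ∧ ndeg G v = K.ncard - 1

/-- `G` is neither a complete graph nor a path graph. -/
def NonElementary {V : Type*} (G : SimpleGraph V) : Prop :=
  G ≠ ⊤ ∧ ∀ n : ℕ, IsEmpty (G ≃g SimpleGraph.pathGraph n)


section Helpers

open SimpleGraph

variable {V : Type*} {G : SimpleGraph V}

private lemma dist_getVert_le (hG : G.Connected) {u v : V} (p : G.Walk u v) (i : ℕ) :
    G.dist u (p.getVert i) ≤ i := by
  induction p generalizing i with
  | nil => simp [SimpleGraph.Walk.getVert, SimpleGraph.dist_self]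
  | @cons a b c hadj q ih =>
    cases i with
    | zero => simp
    | succ n =>
      rw [SimpleGraph.Walk.getVert_cons_succ]
      have h1 : G.dist a b ≤ 1 := by
        simpa using SimpleGraph.dist_le hadj.toWalk
      calc G.dist a (q.getVert n) ≤ G.dist a b + G.dist b (q.getVert n) := hG.dist_triangle
        _ ≤ 1 + n := Nat.add_le_add h1 (ih n)
        _ = n + 1 := by omega

private lemma dist_getVert_right {u v : V} (p : G.Walk u v) (i : ℕ) :
    G.dist (p.getVert i) v ≤ p.length - i := by
  induction p generalizing i with
  | nil => simp [SimpleGraph.Walk.getVert]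
  | @cons a b c hadj q ih =>
    cases i with
    | zero =>
      simpa using SimpleGraph.dist_le (SimpleGraph.Walk.cons hadj q)
    | succ n =>
      rw [SimpleGraph.Walk.getVert_cons_succ]
      have := ih n
      have hlen : (SimpleGraph.Walk.cons hadj q).length = q.length + 1 := by
        simp
      omega

private lemma geodesic_getVert (hG : G.Connected) {u v : V} (p : G.Walk u v)
    (hp : p.length = G.dist u v) {i : ℕ} (hi : i ≤ p.length) :
    G.dist u (p.getVert i) = i ∧ G.dist (p.getVert i) v = p.length - i := by
  have h1 := dist_getVert_le hG p i
  have h2 := dist_getVert_right p i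
  have h3 : G.dist u v ≤ G.dist u (p.getVert i) + G.dist (p.getVert i) v := hG.dist_triangle
  omega

private lemma bdry_nonempty (hG : G.Connected) {u w : V} {m : ℕ} (hm : m < G.dist u w) :
    (bdry G u m).Nonempty := by
  obtain ⟨p, hp⟩ := hG.exists_walk_length_eq_dist u w
  have hm1 : m + 1 ≤ p.length := by omega
  refine ⟨p.getVert m, (geodesic_getVert hG p hp (by omega)).1, p.getVert (m+1),
    p.adj_getVert_succ (by omega), ?_⟩
  have := (geodesic_getVert hG p hp hm1).1
  omega

private lemma bdry_dist_le (hG : G.Connected) {v v' w : V} {m : ℕ}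
    (hb : bdry G v m ⊆ bdry G v' m) (hw : m < G.dist v w) :
    G.dist v' w ≤ G.dist v w := by
  obtain ⟨p, hp⟩ := hG.exists_walk_length_eq_dist v w
  have hm : m ≤ p.length := by omega
  obtain ⟨hd1, hd2⟩ := geodesic_getVert hG p hp hm
  have hmem : p.getVert m ∈ bdry G v m := by
    refine ⟨hd1, p.getVert (m+1), p.adj_getVert_succ (by omega), ?_⟩
    have := (geodesic_getVert hG p hp (i := m+1) (by omega)).1
    omega
  have h2 : G.dist v' (p.getVert m) = m := (hb hmem).1
  have h3 : G.dist v' w ≤ G.dist v' (p.getVert m) + G.dist (p.getVert m) w := hG.dist_triangle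
  omega

private lemma distinguishers_eq (hG : G.Connected) {v v' : V} {m : ℕ} (he : eqBdry G v v' m) :
    distinguishers G v v' =
      {w | (G.dist v w ≤ m ∨ G.dist v' w ≤ m) ∧ G.dist v w ≠ G.dist v' w} := by
  ext w
  simp only [distinguishers, Set.mem_setOf_eq]
  refine ⟨fun hne => ⟨?_, hne⟩, fun hh => hh.2⟩
  by_contra hcon
  push_neg at hcon
  refine hne (le_antisymm ?_ ?_)
  · exact bdry_dist_le hG he.2.1.symm.subset hcon.2
  · exact bdry_dist_le hG he.2.1.subset hcon.1

private lemma distinguishers_comm {u u' : V} :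
    distinguishers G u' u = distinguishers G u u' :=
  Set.ext fun _ => ne_comm

variable [Fintype V]

private lemma chain_le_ncard (hG : G.Connected) {u u' d : V} (hd : G.dist u d < G.dist u' d) :
    G.dist u d + 1 ≤ (distinguishers G u u').ncard := by
  classical
  obtain ⟨p, hp⟩ := hG.exists_walk_length_eq_dist u d
  set a := G.dist u d with ha
  have hmem : ∀ i, i ≤ a → p.getVert i ∈ distinguishers G u u' := by
    intro i hi
    have h1 := geodesic_getVert hG p hp (i := i) (by omega)
    have h2 : G.dist u' d ≤ G.dist u' (p.getVert i) + G.dist (p.getVert i) d :=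
      hG.dist_triangle
    simp only [distinguishers, Set.mem_setOf_eq]
    omega
  have hinj : Set.InjOn p.getVert ↑(Finset.range (a+1)) := by
    intro i hi j hj hij
    simp only [Finset.coe_range, Set.mem_Iio] at hi hj
    have h1 := (geodesic_getVert hG p hp (i := i) (by omega)).1
    have h2 := (geodesic_getVert hG p hp (i := j) (by omega)).1
    rw [hij] at h1
    omega
  have hsub : ↑((Finset.range (a+1)).image p.getVert) ⊆ distinguishers G u u' := by
    intro x hx
    simp only [Finset.coe_image, Set.mem_image, Finset.coe_range, Set.mem_Iio] at hx
    obtain ⟨i, hi, rfl⟩ := hx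
    exact hmem i (by omega)
  calc a + 1 = ((Finset.range (a+1)).image p.getVert).card := by
        rw [Finset.card_image_of_injOn hinj, Finset.card_range]
    _ = (↑((Finset.range (a+1)).image p.getVert) : Set V).ncard :=
        (Set.ncard_coe_finset _).symm
    _ ≤ (distinguishers G u u').ncard := Set.ncard_le_ncard hsub (Set.toFinite _)

private lemma dist_le_ncard_distinguishers (hG : G.Connected) (u u' : V) :
    G.dist u u' ≤ (distinguishers G u u').ncard := by
  classical
  obtain ⟨p, hp⟩ := hG.exists_walk_length_eq_dist u u'
  set t := G.dist u u' with ht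
  set F := (Finset.range (t+1)).filter (fun i => 2*i ≠ t) with hF
  have hd : ∀ i ∈ F, G.dist u (p.getVert i) = i ∧ G.dist u' (p.getVert i) = t - i := by
    intro i hi
    simp only [hF, Finset.mem_filter, Finset.mem_range] at hi
    obtain ⟨h1, h2⟩ := geodesic_getVert hG p hp (i := i) (by omega)
    refine ⟨h1, ?_⟩
    rw [SimpleGraph.dist_comm]
    omega
  have hmem : ∀ i ∈ F, p.getVert i ∈ distinguishers G u u' := by
    intro i hi
    obtain ⟨h1, h2⟩ := hd i hi
    have h3 : 2*i ≠ t ∧ i < t+1 := by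
      have := hi
      simp only [hF, Finset.mem_filter, Finset.mem_range] at this
      exact ⟨this.2, this.1⟩
    simp only [distinguishers, Set.mem_setOf_eq]
    omega
  have hinj : Set.InjOn p.getVert ↑F := by
    intro i hi j hj hij
    have h1 := (hd i hi).1
    have h2 := (hd j hj).1
    rw [hij] at h1
    omega
  have hsub2 : (Finset.range (t+1)).erase (t/2) ⊆ F := by
    intro i hi
    simp only [Finset.mem_erase, Finset.mem_range] at hi
    simp only [hF, Finset.mem_filter, Finset.mem_range]
    refine ⟨hi.2, ?_⟩
    have := hi.1
    omega
  have hcard : t ≤ F.card := by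
    have h1 := Finset.card_le_card hsub2
    have h2 : ((Finset.range (t+1)).erase (t/2)).card = t := by
      rw [Finset.card_erase_of_mem (by simp only [Finset.mem_range]; omega),
        Finset.card_range]
      omega
    omega
  have hsub : ↑(F.image p.getVert) ⊆ distinguishers G u u' := by
    intro x hx
    simp only [Finset.coe_image, Set.mem_image, Finset.mem_coe] at hx
    obtain ⟨i, hi, rfl⟩ := hx
    exact hmem i hi
  calc t ≤ F.card := hcard
    _ = (F.image p.getVert).card := (Finset.card_image_of_injOn hinj).symm
    _ = (↑(F.image p.getVert) : Set V).ncard := (Set.ncard_coe_finset _).symm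
    _ ≤ (distinguishers G u u').ncard := Set.ncard_le_ncard hsub (Set.toFinite _)

private lemma dist_lt_of_mem_distinguishers (hG : G.Connected) {u u' d : V} {k : ℕ}
    (hk : (distinguishers G u u').ncard = k)
    (hd : G.dist u d ≠ G.dist u' d) :
    G.dist u d < 2*k ∧ G.dist u' d < 2*k := by
  have ht : G.dist u u' ≤ k := hk ▸ dist_le_ncard_distinguishers hG u u'
  have htri1 : G.dist u d ≤ G.dist u u' + G.dist u' d := hG.dist_triangle
  have htri2 : G.dist u' d ≤ G.dist u' u + G.dist u d := hG.dist_triangle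
  have hcomm : G.dist u' u = G.dist u u' := SimpleGraph.dist_comm
  rcases lt_or_gt_of_ne hd with hlt | hlt
  · have := chain_le_ncard hG hlt
    rw [hk] at this
    omega
  · have := chain_le_ncard hG (u := u') (u' := u) (d := d) hlt
    rw [distinguishers_comm, hk] at this
    omega

private lemma bdry_subset_of_small (hG : G.Connected) {u u' : V} {k : ℕ}
    (hkey : ∀ d : V, G.dist u d ≠ G.dist u' d → G.dist u d < 2*k ∧ G.dist u' d < 2*k) :
    bdry G u (2*k) ⊆ bdry G u' (2*k) := by
  rintro w ⟨hw, x, hadj, hx⟩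
  have hwx : G.dist w x ≤ 1 := by
    simpa using SimpleGraph.dist_le hadj.toWalk
  have htri : G.dist u x ≤ G.dist u w + G.dist w x := hG.dist_triangle
  have hww : G.dist u' w = 2*k := by
    by_contra hcon
    have h2 := hkey w (by omega)
    omega
  have hxx : G.dist u' x = G.dist u x := by
    by_contra hcon
    have h2 := hkey x (fun hh => hcon hh.symm)
    omega
  exact ⟨hww, x, hadj, by omega⟩

private lemma construct_eqBdry (hG : G.Connected) {u u' : V} (hne : u ≠ u') {k : ℕ}
    (hk : (distinguishers G u u').ncard = k) {w : V} (hfar : 2*k < G.dist u w) :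
    eqBdry G u u' (2*k) := by
  have hkey : ∀ d : V, G.dist u d ≠ G.dist u' d →
      G.dist u d < 2*k ∧ G.dist u' d < 2*k :=
    fun d hd => dist_lt_of_mem_distinguishers hG hk hd
  have hkey' : ∀ d : V, G.dist u' d ≠ G.dist u d →
      G.dist u' d < 2*k ∧ G.dist u d < 2*k := by
    intro d hd
    have := hkey d (fun hh => hd hh.symm)
    exact ⟨this.2, this.1⟩
  exact ⟨hne, Set.Subset.antisymm (bdry_subset_of_small hG hkey)
    (bdry_subset_of_small hG (u := u') (u' := u) hkey'), bdry_nonempty hG hfar⟩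

private lemma gdiam_exists [Nonempty V] (G : SimpleGraph V) :
    ∃ p q : V, G.dist p q = gdiam G := by
  have hne : {n | ∃ u v : V, G.dist u v = n}.Nonempty := by
    refine ⟨G.dist (Classical.arbitrary V) (Classical.arbitrary V), ?_⟩
    exact ⟨_, _, rfl⟩
  have hfin : {n | ∃ u v : V, G.dist u v = n}.Finite := by
    have hsub : {n | ∃ u v : V, G.dist u v = n} ⊆
        Set.range (fun pq : V × V => G.dist pq.1 pq.2) := by
      rintro n ⟨u, v, rfl⟩
      exact ⟨(u, v), rfl⟩
    exact (Set.finite_range _).subset hsub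
  have hmem : gdiam G ∈ {n | ∃ u v : V, G.dist u v = n} :=
    Nat.sSup_mem hne hfin.bddAbove
  obtain ⟨p, q, hpq⟩ := hmem
  exact ⟨p, q, hpq⟩

end Helpers

theorem stmt4 {V : Type*} [Fintype V] (G : SimpleGraph V) (hG : G.Connected)
    (h : ∃ (m : ℕ) (v v' : V), eqBdry G v v' m)
    (heta : etaG G ≤ (gdiam G - 2) / 4) :
    metricDim G = etaG G := by
  classical
  obtain ⟨m₀, v₀, v₀', h₀⟩ := h
  have hne₀ : v₀ ≠ v₀' := h₀.1
  have hKne : {k | ∀ u v : V, u ≠ v → k ≤ (distinguishers G u v).ncard}.Nonempty :=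
    ⟨0, fun _ _ _ => Nat.zero_le _⟩
  have hbdd : BddAbove {k | ∀ u v : V, u ≠ v → k ≤ (distinguishers G u v).ncard} :=
    ⟨(distinguishers G v₀ v₀').ncard, fun k hk => hk v₀ v₀' hne₀⟩
  have hSne : {n | ∃ (m : ℕ) (v v' : V), eqBdry G v v' m ∧ n = etaM G v v' m}.Nonempty :=
    ⟨etaM G v₀ v₀' m₀, m₀, v₀, v₀', h₀, rfl⟩
  have hetaG_mem : etaG G ∈ {n | ∃ (m : ℕ) (v v' : V), eqBdry G v v' m ∧ n = etaM G v v' m} :=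
    Nat.sInf_mem hSne
  have hle : metricDim G ≤ etaG G := by
    unfold metricDim
    apply csSup_le hKne
    intro k hk
    obtain ⟨m₁, v₁, v₁', h₁, heq⟩ := hetaG_mem
    have hcard : (distinguishers G v₁ v₁').ncard = etaM G v₁ v₁' m₁ :=
      congrArg Set.ncard (distinguishers_eq hG h₁)
    calc k ≤ (distinguishers G v₁ v₁').ncard := hk v₁ v₁' h₁.1
      _ = etaM G v₁ v₁' m₁ := hcard
      _ = etaG G := heq.symm
  have hge : etaG G ≤ metricDim G := by
    unfold metricDim
    apply le_csSup hbdd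
    simp only [Set.mem_setOf_eq]
    intro u u' hneu
    by_contra hcon
    push_neg at hcon
    set k := (distinguishers G u u').ncard with hk
    have h4 : 4*k + 6 ≤ gdiam G := by
      have h1 : k + 1 ≤ (gdiam G - 2)/4 := le_trans hcon heta
      have h2 := (Nat.le_div_iff_mul_le (by norm_num : 0 < 4)).mp h1
      omega
    have hnonempty : Nonempty V := ⟨u⟩
    obtain ⟨p, q, hpq⟩ := gdiam_exists G
    have htri : G.dist p q ≤ G.dist p u + G.dist u q := hG.dist_triangle
    have hcomm : G.dist u p = G.dist p u := SimpleGraph.dist_comm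
    have hfar : ∃ w : V, 2*k < G.dist u w := by
      rcases le_or_gt (G.dist p u) (G.dist u q) with hc | hc
      · exact ⟨q, by omega⟩
      · exact ⟨p, by omega⟩
    obtain ⟨w, hw⟩ := hfar
    have heB : eqBdry G u u' (2*k) := construct_eqBdry hG hneu hk.symm hw
    have h5 : etaG G ≤ etaM G u u' (2*k) := Nat.sInf_le ⟨2*k, u, u', heB, rfl⟩
    have h6 : etaM G u u' (2*k) ≤ k := by
      have hsub : {x | (G.dist u x ≤ 2*k ∨ G.dist u' x ≤ 2*k) ∧ G.dist u x ≠ G.dist u' x}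
          ⊆ distinguishers G u u' := fun x hx => hx.2
      exact Set.ncard_le_ncard hsub (Set.toFinite _)
    omega
  exact le_antisymm hle hge
end

section
/- If G is a block graph, then 𝒫(G) ≠ ∅ if and only if G is non-elementary (neither a complete graph nor a path graph). -/
/-!
In a block graph a vertex `x` separates any two of its neighbours that are not adjacent: a detour
avoiding `x` would close a cycle, and the vertex set of a cycle is 2-connected, hence a clique.
So a vertex with neighbours `v ≠ v'` and a third neighbour adjacent to neither gives the common
separating subset `{x}` of the 1-spheres of `v` and `v'`. Without such a vertex, a triangle grows
into a clique that exhausts the connected graph, and a triangle-free block graph is acyclic of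
maximum degree 2, hence a path. Conversely, a complete graph has no separating set at all, and in
a path the only common point of two spheres around `v` and `v'` is their midpoint, whose removal
leaves `v` and `v'` on the two sides.
-/

open SimpleGraph

section

variable {V W : Type*} {G : SimpleGraph V} {H : SimpleGraph W}

namespace ReachOff

variable {S : Set V} {a b c : V}

lemma of_adj (h : G.Adj a b) (ha : a ∉ S) (hb : b ∉ S) : ReachOff G S a b :=
  ⟨h.toWalk, by simp [ha, hb]⟩

lemma symm (h : ReachOff G S a b) : ReachOff G S b a := by
  obtain ⟨p, hp⟩ := h
  exact ⟨p.reverse, by simpa using hp⟩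

lemma trans (h₁ : ReachOff G S a b) (h₂ : ReachOff G S b c) : ReachOff G S a c := by
  obtain ⟨p, hp⟩ := h₁
  obtain ⟨q, hq⟩ := h₂
  refine ⟨p.append q, fun x hx => ?_⟩
  rcases (Walk.mem_support_append_iff p q).mp hx with hx | hx
  exacts [hp x hx, hq x hx]

lemma map (f : G →g H) {T : Set W} (h : ReachOff G (f ⁻¹' T) a b) :
    ReachOff H T (f a) (f b) := by
  obtain ⟨p, hp⟩ := h
  exact ⟨p.map f, by simpa using hp⟩

end ReachOff

namespace SimpleGraph.Walk

variable {v : V} {c : G.Walk v v}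

lemma IsCycle.three_le_ncard_support (hc : c.IsCycle) : 3 ≤ {z | z ∈ c.support}.ncard := by
  have hlen := hc.three_le_length
  have hinj := hc.getVert_injOn'
  refine (Set.two_lt_ncard_iff c.support.finite_toSet).mpr
    ⟨c.getVert 0, c.getVert 1, c.getVert 2, c.getVert_mem_support 0, c.getVert_mem_support 1,
      c.getVert_mem_support 2, ?_, ?_, ?_⟩ <;>
  · intro h
    have := hinj (by simp only [Set.mem_ofPred_eq]; omega)
      (by simp only [Set.mem_ofPred_eq]; omega) h
    omega

/-- Removing a vertex from a cycle leaves a path. -/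
lemma IsCycle.connected_induce_support_diff (hc : c.IsCycle) (y : V) :
    (G.induce ({z | z ∈ c.support} \ {y})).Connected := by
  classical
  by_cases hy : y ∈ c.support
  · obtain ⟨d, hd, hdc⟩ :
        ∃ d : G.Walk y y, d.IsCycle ∧ ∀ z, z ∈ d.support ↔ z ∈ c.support :=
      ⟨c.rotate y hy, hc.rotate hy, fun z => mem_support_rotate_iff c y hy⟩
    have hnil : ¬ d.tail.Nil := by
      rw [← length_eq_zero_iff, length_tail]
      have := hd.three_le_length
      omega
    have hnd := hd.isPath_tail.support_nodup
    rw [← support_dropLast_concat hnil, List.nodup_append] at hnd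
    have hset : {z | z ∈ c.support} \ {y} = {z | z ∈ d.tail.dropLast.support} := by
      ext z
      rw [Set.mem_sdiff, Set.mem_ofPred_eq, Set.mem_ofPred_eq, Set.mem_singleton_iff, ← hdc,
        ← cons_support_tail hd.not_nil, ← support_dropLast_concat hnil]
      have := hnd.2.2 z
      simp only [List.mem_cons, List.mem_append, List.not_mem_nil, or_false] at this ⊢
      constructor
      · rintro ⟨h | h | h, hz⟩ <;> first | exact h | exact absurd h hz
      · exact fun h => ⟨Or.inr (Or.inl h), this h y rfl⟩
    rw [hset]
    exact d.tail.dropLast.connected_induce_support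
  · rw [Set.sdiff_singleton_eq_self (show y ∉ {z | z ∈ c.support} from hy)]
    exact c.connected_induce_support

end SimpleGraph.Walk

namespace IsBlockGraph

lemma isClique_support (hG : IsBlockGraph G) {v : V} {c : G.Walk v v} (hc : c.IsCycle) :
    G.IsClique {z | z ∈ c.support} :=
  hG.2 _ hc.three_le_ncard_support c.connected_induce_support
    fun y _ => hc.connected_induce_support_diff y

lemma not_reachOff (hG : IsBlockGraph G) {x u w : V} (hxu : G.Adj x u) (hxw : G.Adj x w)
    (hne : u ≠ w) (huw : ¬ G.Adj u w) : ¬ ReachOff G {x} u w := by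
  classical
  rintro ⟨p, hp⟩
  have hx : x ∉ p.bypass.support := fun h => hp x (p.support_bypass_subset_support h) rfl
  have hcyc : (Walk.cons hxu (p.bypass.concat hxw.symm)).IsCycle := by
    refine (Walk.cons_isCycle_iff _ hxu).mpr ⟨p.bypass_isPath.concat hx hxw.symm, fun he => ?_⟩
    rw [Walk.edges_concat, List.concat_eq_append, List.mem_append] at he
    rcases he with he | he
    · exact hx (p.bypass.fst_mem_support_of_mem_edges he)
    · simp only [List.mem_singleton, Sym2.eq, Sym2.rel_iff'] at he
      grind [hxu.ne]
  exact huw (hG.isClique_support hcyc (by simp) (by simp) hne)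

lemma isAcyclic (hG : IsBlockGraph G) (hfree : G.CliqueFree 3) : G.IsAcyclic := by
  classical
  intro v c hc
  obtain ⟨a, b, d, ha, hb, hd, hab, had, hbd⟩ :=
    (Set.two_lt_ncard_iff c.support.finite_toSet).mp hc.three_le_ncard_support
  have hK := hG.isClique_support hc
  exact hfree {a, b, d} (is3Clique_triple_iff.mpr ⟨hK ha hb hab, hK ha hd had, hK hb hd hbd⟩)

lemma memPm_one_of_adj (hG : IsBlockGraph G) {x v v' w : V} (hxv : G.Adj x v)
    (hxv' : G.Adj x v') (hxw : G.Adj x w) (hvv' : v ≠ v') (hwv : w ≠ v) (hwv' : w ≠ v')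
    (hnv : ¬ G.Adj w v) (hnv' : ¬ G.Adj w v') : memPm G v v' 1 := by
  have hw : w ∉ ({x} : Set V) := hxw.ne.symm
  refine ⟨hvv', {x}, ?_, ⟨w, v, hw, hxv.ne.symm, hG.not_reachOff hxw hxv hwv hnv⟩,
    ⟨w, hw, hG.not_reachOff hxw hxv hwv hnv, hG.not_reachOff hxw hxv' hwv' hnv'⟩⟩
  rintro _ rfl
  simp [dist_eq_one_iff_adj, hxv.symm, hxv'.symm]

lemma adj_of_forall_not_memPm (hG : IsBlockGraph G) (h𝒫 : ∀ m v v', ¬ memPm G v v' m)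
    {x a b c : V} (hxa : G.Adj x a) (hxb : G.Adj x b) (hxc : G.Adj x c) (hab : a ≠ b)
    (hac : a ≠ c) (hbc : b ≠ c) : G.Adj a b := by
  have cover : ∀ {v v' w}, G.Adj x v → G.Adj x v' → G.Adj x w → v ≠ v' → w ≠ v →
      w ≠ v' → G.Adj w v ∨ G.Adj w v' := by
    intro v v' w hv hv' hw hvv' hwv hwv'
    by_contra! h
    exact h𝒫 1 v v' (hG.memPm_one_of_adj hv hv' hw hvv' hwv hwv' h.1 h.2)
  by_contra hnab
  wlog hca : G.Adj c a generalizing a b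
  · exact this hxb hxa hab.symm hbc hac (fun h => hnab h.symm)
      ((cover hxa hxb hxc hab hac.symm hbc.symm).resolve_left hca)
  have hbc' : G.Adj b c := (cover hxa hxc hxb hac hab.symm hbc).resolve_left (hnab ·.symm)
  exact hG.not_reachOff hxa hxb hab hnab
    ((ReachOff.of_adj hca.symm hxa.ne.symm hxc.ne.symm).trans
      (ReachOff.of_adj hbc'.symm hxc.ne.symm hxb.ne.symm))

lemma eq_top_of_forall_not_memPm [Finite V] (hG : IsBlockGraph G)
    (h𝒫 : ∀ m v v', ¬ memPm G v v' m) {a b c : V} (hab : G.Adj a b) (hac : G.Adj a c)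
    (hbc : G.Adj b c) : G = ⊤ := by
  have htri : G.IsClique {a, b, c} := by
    simp [isClique_insert, hab, hac, hbc]
  obtain ⟨K, hsub, hK⟩ := Finite.exists_le_maximal htri
  suffices hKuniv : K = Set.univ from isClique_univ.mp (hKuniv ▸ hK.prop)
  refine Set.eq_univ_of_forall fun z => by_contra fun hz => ?_
  obtain ⟨d, -, hd, hd'⟩ :=
    (hG.1.preconnected a z).some.exists_boundary_dart K (hsub (by simp)) hz
  refine hd' (hK.2 (hK.prop.insert fun k hk hkd => ?_) (Set.subset_insert _ _)
    (Set.mem_insert _ _))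
  obtain rfl | hky := eq_or_ne k d.fst
  · exact d.adj.symm
  obtain ⟨k', hk', hk'y, hk'k⟩ : ∃ k' ∈ K, k' ≠ d.fst ∧ k' ≠ k := by
    by_contra! h
    have := h a (hsub (by simp))
    have := h b (hsub (by simp))
    have := h c (hsub (by simp))
    grind [hab.ne, hac.ne, hbc.ne]
  exact hG.adj_of_forall_not_memPm h𝒫 d.adj (hK.prop hd hk hky.symm) (hK.prop hd hk' hk'y.symm)
    hkd (fun h => hd' (h ▸ hk')) hk'k.symm

lemma ncard_neighborSet_le_two_of_forall_not_memPm (hG : IsBlockGraph G)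
    (h𝒫 : ∀ m v v', ¬ memPm G v v' m) (hfree : G.CliqueFree 3) (x : V) :
    (G.neighborSet x).ncard ≤ 2 := by
  classical
  by_contra! h
  obtain ⟨a, b, c, ha, hb, hc, hab, hac, hbc⟩ :=
    (Set.two_lt_ncard_iff (Set.finite_of_ncard_pos (by omega))).mp h
  exact hfree {x, a, b} (is3Clique_triple_iff.mpr
    ⟨ha, hb, hG.adj_of_forall_not_memPm h𝒫 ha hb hc hab hac hbc⟩)

end IsBlockGraph

namespace SimpleGraph

lemma exists_isPath_forall_length_le [Finite V] [Nonempty V] (G : SimpleGraph V) :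
    ∃ (u v : V) (p : G.Walk u v), p.IsPath ∧
      ∀ (a b : V) (q : G.Walk a b), q.IsPath → q.length ≤ p.length := by
  have := Fintype.ofFinite V
  obtain ⟨v⟩ := ‹Nonempty V›
  set T := {n | ∃ (a b : V) (q : G.Walk a b), q.IsPath ∧ q.length = n}
  have hT : BddAbove T :=
    ⟨Fintype.card V, by rintro _ ⟨a, b, q, hq, rfl⟩; exact hq.length_lt.le⟩
  obtain ⟨u, w, p, hp, hlen⟩ := Nat.sSup_mem (⟨0, v, v, .nil, .nil, rfl⟩ : T.Nonempty) hT
  exact ⟨u, w, p, hp, fun a b q hq => hlen ▸ le_csSup hT ⟨a, b, q, hq, rfl⟩⟩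

namespace Walk

variable {u v : V} {p : G.Walk u v}

/-- A longest path cannot be extended at its ends, and an interior vertex already has two
neighbours on it, so no edge leaves it. -/
lemma IsPath.mem_support_of_forall_length_le [Finite V] (hconn : G.Connected)
    (hdeg : ∀ x, (G.neighborSet x).ncard ≤ 2) (hp : p.IsPath)
    (hmax : ∀ (a b : V) (q : G.Walk a b), q.IsPath → q.length ≤ p.length) (z : V) :
    z ∈ p.support := by
  by_contra hz
  obtain ⟨⟨⟨y, y'⟩, hyy'⟩, -, hy, hy'⟩ :=
    (hconn.preconnected u z).some.exists_boundary_dart {w | w ∈ p.support} p.start_mem_support hz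
  obtain ⟨i, rfl, hi⟩ := mem_support_iff_exists_getVert.mp hy
  simp only at hyy' hy'
  rcases Nat.eq_zero_or_pos i with rfl | hi0
  · rw [getVert_zero] at hyy'
    have := hmax _ _ _ ((cons_isPath_iff hyy'.symm p).mpr ⟨hp, hy'⟩)
    simp at this
  rcases hi.eq_or_lt with rfl | hil
  · rw [getVert_length] at hyy'
    have := hmax _ _ _ (hp.concat hy' hyy')
    simp at this
  have hprev : G.Adj (p.getVert i) (p.getVert (i - 1)) := by
    simpa [Nat.sub_add_cancel hi0] using (p.adj_getVert_succ (i := i - 1) (by omega)).symm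
  refine (hdeg (p.getVert i)).not_gt ((Set.two_lt_ncard_iff (Set.toFinite _)).mpr
    ⟨_, _, _, hprev, p.adj_getVert_succ hil, hyy', fun h => ?_,
      fun h => hy' (h ▸ p.getVert_mem_support _), fun h => hy' (h ▸ p.getVert_mem_support _)⟩)
  have := hp.getVert_injOn (by simp only [Set.mem_ofPred_eq]; omega)
    (by simp only [Set.mem_ofPred_eq]; omega) h
  omega

lemma IsPath.toSubgraph_eq_top (hG : G.IsAcyclic) (hp : p.IsPath)
    (hsupp : ∀ z, z ∈ p.support) : p.toSubgraph = ⊤ := by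
  refine eq_top_iff.mpr ⟨fun z _ => by simp [hsupp], fun a b hab => ?_⟩
  obtain ⟨i, rfl, hi⟩ := mem_support_iff_exists_getVert.mp (hsupp a)
  obtain ⟨j, rfl, hj⟩ := mem_support_iff_exists_getVert.mp (hsupp b)
  wlog hij : i < j generalizing i j
  · have hne : i ≠ j := fun h => hab.ne (h ▸ rfl)
    exact (this j hj i hi hab.symm (by omega)).symm
  have hmem : p.getVert j ∈ (p.drop i).support := by
    rw [show j = i + (j - i) by omega, ← drop_getVert]
    exact getVert_mem_support _ _
  have hsnd := hG.eq_snd_of_adj_start (hp.drop i) hab hmem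
  rw [snd, drop_getVert] at hsnd
  rw [hsnd]
  exact p.toSubgraph_adj_getVert (by omega)

end Walk

lemma exists_iso_pathGraph_of_isAcyclic [Finite V] (hconn : G.Connected) (hacyc : G.IsAcyclic)
    (hdeg : ∀ x, (G.neighborSet x).ncard ≤ 2) : ∃ n, Nonempty (G ≃g pathGraph n) := by
  classical
  have := hconn.nonempty
  obtain ⟨u, v, p, hp, hmax⟩ := G.exists_isPath_forall_length_le
  have e := hp.pathGraphIsoToSubgraph
  rw [hp.toSubgraph_eq_top hacyc (hp.mem_support_of_forall_length_le hconn hdeg hmax)] at e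
  exact ⟨_, ⟨(Subgraph.topIso.comp e).symm⟩⟩


lemma Hom.edist_le (f : G →g H) (u v : V) : H.edist (f u) (f v) ≤ G.edist u v := by
  by_cases hr : G.Reachable u v
  · obtain ⟨p, hp⟩ := hr.exists_walk_length_eq_edist
    exact hp ▸ (SimpleGraph.edist_le (p.map f)).trans_eq (by simp)
  · simp [edist_eq_top_of_not_reachable hr]

lemma Iso.dist_eq (f : G ≃g H) (u v : V) : H.dist (f u) (f v) = G.dist u v := by
  have h := Hom.edist_le f.symm.toHom (f u) (f v)
  simp only [RelEmbedding.coe_toRelHom, RelIso.coe_toRelEmbedding, RelIso.symm_apply_apply] at h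
  exact congrArg ENat.toNat (le_antisymm (Hom.edist_le f.toHom u v) h)

lemma pathGraph_exists_walk_of_le {n : ℕ} {i j : Fin n} (hij : (i : ℕ) ≤ j) :
    ∃ p : (pathGraph n).Walk i j, p.length = j - i ∧
      ∀ z ∈ p.support, (i : ℕ) ≤ z ∧ (z : ℕ) ≤ j := by
  obtain ⟨d, hd⟩ := Nat.exists_eq_add_of_le hij
  induction d generalizing i with
  | zero =>
    obtain rfl : i = j := Fin.ext (by omega)
    exact ⟨.nil, by simp, by simp⟩
  | succ d ih =>
    have hadj : (pathGraph n).Adj i ⟨i + 1, by omega⟩ := pathGraph_adj.mpr (Or.inl rfl)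
    obtain ⟨p, hp, hsupp⟩ := ih (i := ⟨i + 1, by omega⟩) (by simp; omega) (by simp; omega)
    refine ⟨.cons hadj p, by simp [hp]; omega, fun z hz => ?_⟩
    rcases List.mem_cons.mp (Walk.support_cons hadj p ▸ hz) with rfl | hz
    · exact ⟨le_rfl, hij⟩
    · have := hsupp z hz
      simp only at this
      omega

lemma pathGraph_val_le_add_length {n : ℕ} {i j : Fin n} (p : (pathGraph n).Walk i j) :
    (i : ℕ) ≤ j + p.length ∧ (j : ℕ) ≤ i + p.length := by
  induction p with
  | nil => simp
  | cons h p ih =>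
    rw [pathGraph_adj] at h
    simp only [Walk.length_cons]
    omega

lemma pathGraph_dist_eq_iff {n : ℕ} {i j : Fin n} {m : ℕ} :
    (pathGraph n).dist i j = m ↔ (j : ℕ) = i + m ∨ (i : ℕ) = j + m := by
  wlog hij : (i : ℕ) ≤ j generalizing i j
  · rw [dist_comm, this (by omega)]
    tauto
  obtain ⟨p, hp, -⟩ := pathGraph_exists_walk_of_le hij
  obtain ⟨q, hq⟩ := (pathGraph_preconnected n i j).exists_walk_length_eq_dist
  have := dist_le p
  have := pathGraph_val_le_add_length q
  omega

lemma pathGraph_reachOff {n : ℕ} {S : Set (Fin n)} {i j : Fin n}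
    (h : ∀ z ∈ S, (z : ℕ) < i ∧ (z : ℕ) < j ∨ (i : ℕ) < z ∧ (j : ℕ) < z) :
    ReachOff (pathGraph n) S i j := by
  wlog hij : (i : ℕ) ≤ j generalizing i j
  · exact (this (fun z hz => by have := h z hz; omega) (by omega)).symm
  obtain ⟨p, -, hp⟩ := pathGraph_exists_walk_of_le hij
  refine ⟨p, fun z hz hzS => ?_⟩
  have := hp z hz
  have := h z hzS
  omega

lemma pathGraph_not_memPm (n m : ℕ) (v v' : Fin n) : ¬ memPm (pathGraph n) v v' m := by
  rintro ⟨hne, S, hsub, ⟨a, b, -, -, hab⟩, ⟨w, hw, hwv, hwv'⟩⟩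
  obtain ⟨s, hs⟩ : S.Nonempty := by
    by_contra! h
    exact hab (pathGraph_reachOff (by simp [h]))
  have hvv' : (v : ℕ) ≠ v' := Fin.val_ne_of_ne hne
  have hmid : ∀ t ∈ S,
      (t : ℕ) = v + m ∧ (v' : ℕ) = t + m ∨ (v : ℕ) = t + m ∧ (t : ℕ) = v' + m := by
    intro t ht
    obtain ⟨h, h'⟩ := hsub ht
    rw [Set.mem_ofPred_eq, pathGraph_dist_eq_iff] at h h'
    omega
  have hS : ∀ t ∈ S, t = s := fun t ht =>
    Fin.ext (by have := hmid t ht; have := hmid s hs; omega)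
  have hws : (w : ℕ) ≠ s := fun h => hw (Fin.ext h ▸ hs)
  have := hmid s hs
  by_cases hside : (w : ℕ) < s ↔ (v : ℕ) < s
  · exact hwv (pathGraph_reachOff fun z hz => by rw [hS z hz]; omega)
  · exact hwv' (pathGraph_reachOff fun z hz => by rw [hS z hz]; omega)

end SimpleGraph

lemma memPm.ne_top {v v' : V} {m : ℕ} (h : memPm G v v' m) : G ≠ ⊤ := by
  rintro rfl
  obtain ⟨-, S, -, ⟨a, b, ha, hb, hab⟩, -⟩ := h
  obtain rfl | hne := eq_or_ne a b
  · exact hab ⟨.nil, by simpa⟩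
  · exact hab (ReachOff.of_adj hne ha hb)

lemma memPm.map (f : G ≃g H) {v v' : V} {m : ℕ} (h : memPm G v v' m) :
    memPm H (f v) (f v') m := by
  obtain ⟨hne, S, hsub, ⟨a, b, ha, hb, hab⟩, ⟨w, hw, hwv, hwv'⟩⟩ := h
  have hoff : ∀ {x y}, ¬ ReachOff G S x y → ¬ ReachOff H (f.symm ⁻¹' S) (f x) (f y) :=
    fun hxy h' => hxy (by simpa using h'.map f.symm.toHom)
  refine ⟨f.injective.ne hne, f.symm ⁻¹' S, fun x hx => ?_,
    ⟨f a, f b, by simpa, by simpa, hoff hab⟩, ⟨f w, by simpa, hoff hwv, hoff hwv'⟩⟩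
  obtain ⟨h₁, h₂⟩ := hsub hx
  rw [← f.apply_symm_apply x]
  exact ⟨(f.dist_eq _ _).trans h₁, (f.dist_eq _ _).trans h₂⟩

end

theorem stmt16 {V : Type*} [Fintype V] (G : SimpleGraph V) (hG : IsBlockGraph G) :
    (∃ (m : ℕ) (v v' : V), memPm G v v' m) ↔ NonElementary G := by
  refine ⟨fun ⟨m, v, v', h⟩ =>
    ⟨h.ne_top, fun n => ⟨fun f => pathGraph_not_memPm n m _ _ (h.map f)⟩⟩, fun hne => ?_⟩
  by_contra! h𝒫
  by_cases hfree : G.CliqueFree 3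
  · obtain ⟨n, ⟨f⟩⟩ := exists_iso_pathGraph_of_isAcyclic hG.1 (hG.isAcyclic hfree)
      (hG.ncard_neighborSet_le_two_of_forall_not_memPm h𝒫 hfree)
    exact (hne.2 n).false f
  · classical
    obtain ⟨t, ht⟩ := not_forall.mp hfree
    obtain ⟨a, b, c, hab, hac, hbc, -⟩ := is3Clique_iff.mp (not_not.mp ht)
    exact hne.1 (hG.eq_top_of_forall_not_memPm h𝒫 hab hac hbc)
end
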